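/- Let X be a family of nonnegative integrable random variables on (Ω, F, P) closed under pairwise minimum, and let G be a sub-σ-algebra of F. Then the G-conditional expectation commutes with the essential infimum: E[ess inf_{X∈X} X | G] = ess inf_{X∈X} E[X | G] almost surely. -/

import Mathlib

/-!
Choose a sequence in `𝒳` whose expectations decrease to `L = inf {E[X] : X ∈ 𝒳}`; replacing it by
its running minima keeps it in `𝒳`, so it may be taken decreasing, with pointwise limit `W`.
Since `Zₙ ⊓ X ∈ 𝒳`, monotone convergence gives `E[W ⊓ X] ≥ L = E[W]`, hence `W ≤ X` a.s. for
every `X ∈ 𝒳`, and `W` is the essential infimum of `𝒳`. By conditional monotone convergence,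
`E[Zₙ | G] ↓ E[W | G]` a.s., so every lower bound of the conditional expectations lies below
`E[W | G]`, while `E[W | G]` is itself such a lower bound.
-/

open MeasureTheory Filter Topology

lemma exists_antitone_tendsto_csInf_image {α : Type*} [SemilatticeInf α] {S : Set α}
    (hne : S.Nonempty) (hinf : ∀ x ∈ S, ∀ y ∈ S, x ⊓ y ∈ S) {f : α → ℝ} (hf : MonotoneOn f S)
    (hbdd : BddBelow (f '' S)) :
    ∃ z : ℕ → α, (∀ n, z n ∈ S) ∧ Antitone z ∧
      Tendsto (fun n => f (z n)) atTop (𝓝 (sInf (f '' S))) := by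
  have hy : ∀ n : ℕ, ∃ y ∈ S, f y < sInf (f '' S) + 1 / (n + 1) := fun n => by
    obtain ⟨_, ⟨y, hyS, rfl⟩, hlt⟩ := Real.lt_sInf_add_pos (hne.image f) Nat.one_div_pos_of_nat
    exact ⟨y, hyS, hlt⟩
  choose y hyS hylt using hy
  set z : ℕ → α := fun n => (Finset.range (n + 1)).inf' Finset.nonempty_range_add_one y
  have hzS : ∀ n, z n ∈ S := fun n => Finset.inf'_induction _ _ hinf fun i _ => hyS i
  have hupper : Tendsto (fun n : ℕ => sInf (f '' S) + 1 / (n + 1)) atTop (𝓝 (sInf (f '' S))) := by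
    simpa using (tendsto_const_nhds (x := sInf (f '' S))).add
      tendsto_one_div_add_atTop_nhds_zero_nat
  refine ⟨z, hzS, fun a b hab => Finset.inf'_mono _ (Finset.range_subset_range.2 (by omega)) _,
    tendsto_of_tendsto_of_tendsto_of_le_of_le tendsto_const_nhds hupper
      (fun n => csInf_le hbdd ⟨z n, hzS n, rfl⟩) fun n => ?_⟩
  exact (hf (hzS n) (hyS n) (Finset.inf'_le _ (Finset.self_mem_range_succ n))).trans (hylt n).le

section

variable {Ω : Type*} {m0 : MeasurableSpace Ω} {μ : Measure Ω} {Z : ℕ → Ω → ℝ}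

lemma ae_tendsto_iInf_of_antitone (hanti : Antitone Z) (hnonneg : ∀ n, 0 ≤ᵐ[μ] Z n) :
    ∀ᵐ ω ∂μ, Tendsto (fun n => Z n ω) atTop (𝓝 (⨅ n, Z n ω)) := by
  filter_upwards [ae_all_iff.2 hnonneg] with ω hω
  exact tendsto_atTop_ciInf (fun a b hab => hanti hab ω) ⟨0, Set.forall_mem_range.2 hω⟩

lemma integrable_iInf_of_antitone (hint : ∀ n, Integrable (Z n) μ) (hanti : Antitone Z)
    (hnonneg : ∀ n, 0 ≤ᵐ[μ] Z n) : Integrable (fun ω => ⨅ n, Z n ω) μ := by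
  have htend := ae_tendsto_iInf_of_antitone hanti hnonneg
  refine integrable_of_le_of_le (aestronglyMeasurable_of_tendsto_ae atTop (fun n => (hint n).1)
    htend) ?_ ?_ (integrable_zero _ _ μ) (hint 0)
  · filter_upwards [ae_all_iff.2 hnonneg] with ω hω using le_ciInf hω
  · filter_upwards [htend] with ω hω
    exact Antitone.le_of_tendsto (fun a b hab => hanti hab ω) hω 0

lemma ae_iInf_le_of_tendsto_integral {X : Ω → ℝ} {L : ℝ} (hint : ∀ n, Integrable (Z n) μ)
    (hX : Integrable X μ) (hanti : Antitone Z) (hnonneg : ∀ n, 0 ≤ᵐ[μ] Z n)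
    (hlim : Tendsto (fun n => ∫ ω, Z n ω ∂μ) atTop (𝓝 L))
    (hL : ∀ n, L ≤ ∫ ω, min (Z n ω) (X ω) ∂μ) :
    (fun ω => ⨅ n, Z n ω) ≤ᵐ[μ] X := by
  set W : Ω → ℝ := fun ω => ⨅ n, Z n ω
  have hW := integrable_iInf_of_antitone hint hanti hnonneg
  have htend := ae_tendsto_iInf_of_antitone hanti hnonneg
  have hanti_ae : ∀ᵐ ω ∂μ, Antitone fun n => Z n ω := ae_of_all _ fun ω a b hab => hanti hab ω
  have hWL : ∫ ω, W ω ∂μ = L :=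
    tendsto_nhds_unique (integral_tendsto_of_tendsto_of_antitone hint hW hanti_ae htend) hlim
  have hminL : L ≤ ∫ ω, min (W ω) (X ω) ∂μ := by
    refine ge_of_tendsto' (integral_tendsto_of_tendsto_of_antitone (fun n => (hint n).inf hX)
      (hW.inf hX) ?_ ?_) hL
    · filter_upwards [hanti_ae] with ω hω a b hab using min_le_min_right _ (hω hab)
    · filter_upwards [htend] with ω hω using hω.min tendsto_const_nhds
  have hmin_eq : (fun ω => min (W ω) (X ω)) =ᵐ[μ] W :=
    (integral_eq_iff_of_ae_le (hW.inf hX) hW (ae_of_all _ fun ω => min_le_left _ _)).1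
      (le_antisymm (integral_mono (hW.inf hX) hW fun ω => min_le_left _ _) (hWL ▸ hminL))
  filter_upwards [hmin_eq] with ω hω using min_eq_left_iff.1 hω

theorem ae_tendsto_condExp_of_antitone {m : MeasurableSpace Ω} (hm : m ≤ m0)
    [SigmaFinite (μ.trim hm)] {W : Ω → ℝ} (hint : ∀ n, Integrable (Z n) μ)
    (hW : Integrable W μ) (hanti : ∀ᵐ ω ∂μ, Antitone fun n => Z n ω)
    (htend : ∀ᵐ ω ∂μ, Tendsto (fun n => Z n ω) atTop (𝓝 (W ω))) :
    ∀ᵐ ω ∂μ, Tendsto (fun n => μ[Z n|m] ω) atTop (𝓝 (μ[W|m] ω)) := by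
  have hWle : ∀ n, W ≤ᵐ[μ] Z n := fun n => by
    filter_upwards [hanti, htend] with ω hω hωt using hω.le_of_tendsto hωt n
  have hstep : ∀ n, μ[Z (n + 1)|m] ≤ᵐ[μ] μ[Z n|m] := fun n =>
    condExp_mono (hint _) (hint _) (by filter_upwards [hanti] with ω hω using hω n.le_succ)
  refine tendsto_of_integral_tendsto_of_antitone (fun n => integrable_condExp) integrable_condExp
    ?_ ?_ (ae_all_iff.2 fun n => condExp_mono hW (hint n) (hWle n))
  · simp_rw [integral_condExp hm]
    exact integral_tendsto_of_tendsto_of_antitone hint hW hanti htend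
  · filter_upwards [ae_all_iff.2 hstep] with ω hω using antitone_nat_of_succ_le hω

end

/-- For a family of nonnegative integrable random variables closed under pairwise minimum,
the conditional expectation with respect to a sub-σ-algebra commutes with the essential
infimum: `E[ess inf 𝒳 | G] = ess inf {E[X|G] : X ∈ 𝒳}` a.s. -/
theorem stmt_1 {Ω : Type*} {m0 : MeasurableSpace Ω} (P : Measure Ω) [IsProbabilityMeasure P]
    (m : MeasurableSpace Ω) (hm : m ≤ m0)
    (𝒳 : Set (Ω → ℝ)) (h𝒳ne : 𝒳.Nonempty)
    (hint : ∀ X ∈ 𝒳, Integrable X P)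
    (hpos : ∀ X ∈ 𝒳, 0 ≤ᵐ[P] X)
    (hmin : ∀ X ∈ 𝒳, ∀ Y ∈ 𝒳, (fun ω => min (X ω) (Y ω)) ∈ 𝒳)
    -- `Xstar` is the essential infimum of the family `𝒳`
    (Xstar : Ω → ℝ)
    (hXstar_lb : ∀ X ∈ 𝒳, Xstar ≤ᵐ[P] X)
    (hXstar_great : ∀ Y : Ω → ℝ, (∀ X ∈ 𝒳, Y ≤ᵐ[P] X) → Y ≤ᵐ[P] Xstar)
    -- `Ystar` is the essential infimum of the family of conditional expectations
    (Ystar : Ω → ℝ)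
    (hYstar_lb : ∀ X ∈ 𝒳, Ystar ≤ᵐ[P] P[X|m])
    (hYstar_great : ∀ Y : Ω → ℝ, (∀ X ∈ 𝒳, Y ≤ᵐ[P] P[X|m]) → Y ≤ᵐ[P] Ystar) :
    P[Xstar|m] =ᵐ[P] Ystar := by
  have hbdd : BddBelow ((fun X : Ω → ℝ => ∫ ω, X ω ∂P) '' 𝒳) :=
    ⟨0, Set.forall_mem_image.2 fun X hX => integral_nonneg_of_ae (hpos X hX)⟩
  obtain ⟨Z, hZ𝒳, hanti, hlim⟩ := exists_antitone_tendsto_csInf_image h𝒳ne hmin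
    (fun X hX Y hY hXY => integral_mono (hint X hX) (hint Y hY) hXY) hbdd
  have hZint n := hint _ (hZ𝒳 n)
  have hZpos n := hpos _ (hZ𝒳 n)
  have htend := ae_tendsto_iInf_of_antitone hanti hZpos
  have hW_lb : ∀ X ∈ 𝒳, (fun ω => ⨅ n, Z n ω) ≤ᵐ[P] X := fun X hX =>
    ae_iInf_le_of_tendsto_integral hZint (hint X hX) hanti hZpos hlim
      fun n => csInf_le hbdd ⟨_, hmin _ (hZ𝒳 n) X hX, rfl⟩
  have hW := integrable_iInf_of_antitone hZint hanti hZpos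
  have hXstar : Xstar =ᵐ[P] fun ω => ⨅ n, Z n ω := by
    refine EventuallyLE.antisymm ?_ (hXstar_great _ hW_lb)
    filter_upwards [ae_all_iff.2 fun n => hXstar_lb _ (hZ𝒳 n), htend] with ω hle hω
    exact ge_of_tendsto' hω hle
  refine (condExp_congr_ae hXstar).trans (EventuallyLE.antisymm ?_ ?_)
  · exact hYstar_great _ fun X hX => condExp_mono hW (hint X hX) (hW_lb X hX)
  · filter_upwards [ae_all_iff.2 fun n => hYstar_lb _ (hZ𝒳 n),
      ae_tendsto_condExp_of_antitone hm hZint hW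
        (ae_of_all _ fun ω a b hab => hanti hab ω) htend] with ω hle hω
    exact ge_of_tendsto' hω hle
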